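/- arXiv:cs/0406050 — 3 statements merged into one kernel-verified Lean document; each statement's English description precedes it below -/
import Mathlib

section
/- For transmission of a code of rate r over BEC(ε) using Shannon's random parity-check ensemble with maximum-likelihood decoding, the expected block error probability equals ∑_{E=0}^{n·r̄} C(n,E) ε^E (1-ε)^{n-E} (1 - ∏_{i=0}^{E-1}(1 - 2^{i - n·r̄})) + ∑_{E=n·r̄+1}^{n} C(n,E) ε^E (1-ε)^{n-E}, where r̄ = 1-r. -/
/-!
For an erasure set `S` with `|S| = E`, the erased columns of a uniform `H` are `E` independent
uniform vectors of `K^m`, `q = |K|`. They are linearly independent exactly when the `i`-th one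
avoids the `q^i`-element span of its predecessors, which happens with probability
`∏_{i<E} (1 - q^(i-m))`. The failure probability therefore depends on `S` only through `|S|`,
so grouping erasure sets by size produces the binomial weights; for `E > m` the factor `i = m`
makes the product vanish, which accounts for the second sum.
-/

open Finset Module
open scoped Matrix

theorem card_linearIndependent_subtype_finset {K V ι : Type*} [Field K] [AddCommGroup V]
    [Module K V] (S : Finset ι) :
    Nat.card {g : S → V // LinearIndependent K g} =
      Nat.card {s : Fin #S → V // LinearIndependent K s} :=
  Nat.card_congr <| (S.equivFin.arrowCongr (Equiv.refl V)).subtypeEquiv fun _ =>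
    (linearIndependent_equiv S.equivFin.symm).symm

section LinearIndependent

variable {K V : Type*} [Field K] [Fintype K] [AddCommGroup V] [Module K V] [Finite V]

local notation "q" => Fintype.card K

theorem card_linearIndependent_fin_eq_prod (R : Type*) [CommRing R] (k : ℕ) :
    (Nat.card {s : Fin k → V // LinearIndependent K s} : R) =
      ∏ i ∈ range k, ((q : R) ^ finrank K V - (q : R) ^ i) := by
  by_cases hk : k ≤ finrank K V
  · rw [card_linearIndependent hk, Fin.prod_univ_eq_prod_range (fun i => q ^ finrank K V - q ^ i),
      Nat.cast_prod]
    refine prod_congr rfl fun i hi => ?_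
    have hle : q ^ i ≤ q ^ finrank K V :=
      Nat.pow_le_pow_right Fintype.card_pos (by have := mem_range.1 hi; omega)
    rw [Nat.cast_sub hle, Nat.cast_pow, Nat.cast_pow]
  · rw [not_le] at hk
    have : IsEmpty {s : Fin k → V // LinearIndependent K s} :=
      ⟨fun ⟨s, hs⟩ => by simpa using (hs.fintype_card_le_finrank.trans_lt hk).ne⟩
    rw [Nat.card_of_isEmpty, Nat.cast_zero, prod_eq_zero (mem_range.2 hk) (sub_self _)]

end LinearIndependent

theorem prod_range_pow_sub_pow {F : Type*} [Field F] {q : F} (hq : q ≠ 0) (m k : ℕ) :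
    ∏ i ∈ range k, (q ^ m - q ^ i) =
      (q ^ m) ^ k * ∏ i ∈ range k, (1 - q ^ ((i : ℤ) - m)) := by
  rw [← card_range k, ← prod_const, card_range, ← prod_mul_distrib]
  refine prod_congr rfl fun i _ => ?_
  rw [mul_one_sub, zpow_sub₀ hq, zpow_natCast, zpow_natCast,
    mul_div_cancel₀ _ (pow_ne_zero _ hq)]

theorem prod_range_one_sub_zpow_eq_zero {F : Type*} [Field F] (q : F) {m k : ℕ} (h : m < k) :
    ∏ i ∈ range k, (1 - q ^ ((i : ℤ) - m)) = 0 :=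
  prod_eq_zero (mem_range.2 h) (by simp)

theorem Nat.card_subtype_restrict {ι α : Type*} [Fintype ι] [Fintype α] (S : Finset ι)
    (P : (S → α) → Prop) :
    Nat.card {f : ι → α // P fun j => f j} =
      Nat.card {g : S → α // P g} * Fintype.card α ^ (Fintype.card ι - #S) := by
  classical
  let e := (Equiv.piEquivPiSubtypeProd (· ∈ S) fun _ => α).subtypeEquiv
      (p := fun f => P fun j => f j) (q := fun y => P y.1) fun _ => Iff.rfl
  rw [Nat.card_congr (e.trans Equiv.prodSubtypeFstEquivSubtypeProd), Nat.card_prod,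
    Nat.card_eq_fintype_card (α := {j // j ∉ S} → α), Fintype.card_fun,
    Fintype.card_subtype_compl, Fintype.card_coe]

theorem Matrix.rank_eq_card_iff_linearIndependent_col {K m n : Type*} [Field K] [Fintype n]
    (A : Matrix m n K) : A.rank = Fintype.card n ↔ LinearIndependent K A.col := by
  rw [rank_eq_finrank_span_cols, linearIndependent_iff_card_eq_finrank_span, Set.finrank, eq_comm]

section Matrix

variable {K ι : Type*} [Field K] [Fintype K] [Fintype ι]

local notation "q" => Fintype.card K

theorem card_linearIndependent_cols_div_pow (m : ℕ) (S : Finset ι) :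
    (Nat.card {H : Matrix (Fin m) ι K // LinearIndependent K fun j : S => Hᵀ j} : ℝ) /
        (q : ℝ) ^ (m * Fintype.card ι) =
      ∏ i ∈ range #S, (1 - (q : ℝ) ^ ((i : ℤ) - m)) := by
  have hq : (q : ℝ) ≠ 0 := Nat.cast_ne_zero.2 Fintype.card_ne_zero
  have hcols : Nat.card {H : Matrix (Fin m) ι K // LinearIndependent K fun j : S => Hᵀ j} =
      Nat.card {g : S → Fin m → K // LinearIndependent K g} *
        Fintype.card (Fin m → K) ^ (Fintype.card ι - #S) :=
    (Nat.card_congr <| (Matrix.transposeAddEquiv (Fin m) ι K).toEquiv.subtypeEquiv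
      fun _ => Iff.rfl).trans (Nat.card_subtype_restrict S fun g => LinearIndependent K g)
  rw [hcols, card_linearIndependent_subtype_finset, Nat.cast_mul,
    card_linearIndependent_fin_eq_prod, prod_range_pow_sub_pow hq]
  simp only [finrank_fintype_fun_eq_card, Fintype.card_fin, Fintype.card_fun, Nat.cast_pow]
  rw [mul_right_comm, ← pow_add, Nat.add_sub_cancel' (card_le_univ S), ← pow_mul,
    mul_div_cancel_left₀ _ (by positivity)]

theorem card_rank_submatrix_ne_div_pow (m : ℕ) (S : Finset ι) :
    (Nat.card {H : Matrix (Fin m) ι K //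
        (H.submatrix id (fun j : S => (j : ι))).rank ≠ #S} : ℝ) /
        (q : ℝ) ^ (m * Fintype.card ι) =
      1 - ∏ i ∈ range #S, (1 - (q : ℝ) ^ ((i : ℤ) - m)) := by
  classical
  have hrank (H : Matrix (Fin m) ι K) : (H.submatrix id (fun j : S => (j : ι))).rank = #S ↔
      LinearIndependent K fun j : S => Hᵀ j := by
    rw [← Fintype.card_coe S]
    exact Matrix.rank_eq_card_iff_linearIndependent_col _
  simp only [ne_eq, hrank]
  have hq : (q : ℝ) ^ (m * Fintype.card ι) ≠ 0 :=
    pow_ne_zero _ (Nat.cast_ne_zero.2 Fintype.card_ne_zero)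
  have hall : Fintype.card (Matrix (Fin m) ι K) = q ^ (m * Fintype.card ι) := by
    rw [Fintype.card_eq_nat_card]
    simp [Matrix, ← pow_mul, mul_comm]
  rw [Nat.card_eq_fintype_card, Fintype.card_subtype_compl,
    Nat.cast_sub (Fintype.card_subtype_le _), sub_div,
    ← Nat.card_eq_fintype_card (α := {H : Matrix (Fin m) ι K // _}),
    card_linearIndependent_cols_div_pow, hall, Nat.cast_pow, div_self hq]

end Matrix

theorem stmt_2_general (n m : ℕ) (hm : m ≤ n) (ε : ℝ) :
    (∑ S : Finset (Fin n), ε ^ S.card * (1 - ε) ^ (n - S.card) *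
      ((Nat.card {H : Matrix (Fin m) (Fin n) (ZMod 2) //
          (H.submatrix id (fun j : S => (j : Fin n))).rank ≠ S.card} : ℝ) / 2 ^ (m * n))) =
    (∑ E ∈ Finset.range (m + 1), (n.choose E : ℝ) * ε ^ E * (1 - ε) ^ (n - E) *
        (1 - ∏ i ∈ Finset.range E, (1 - (2 : ℝ) ^ ((i : ℤ) - (m : ℤ))))) +
    ∑ E ∈ Finset.Icc (m + 1) n, (n.choose E : ℝ) * ε ^ E * (1 - ε) ^ (n - E) := by
  have hfail (S : Finset (Fin n)) :
      (Nat.card {H : Matrix (Fin m) (Fin n) (ZMod 2) //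
          (H.submatrix id (fun j : S => (j : Fin n))).rank ≠ #S} : ℝ) / 2 ^ (m * n) =
        1 - ∏ i ∈ range #S, (1 - (2 : ℝ) ^ ((i : ℤ) - m)) := by
    simpa using card_rank_submatrix_ne_div_pow (K := ZMod 2) m S
  simp_rw [hfail]
  rw [← powerset_univ, sum_powerset_apply_card fun E =>
      ε ^ E * (1 - ε) ^ (n - E) * (1 - ∏ i ∈ range E, (1 - (2 : ℝ) ^ ((i : ℤ) - m))),
    card_univ, Fintype.card_fin, ← sum_range_add_sum_Ico _ (by omega : m + 1 ≤ n + 1),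
    Ico_add_one_right_eq_Icc]
  congr 1
  · refine sum_congr rfl fun E _ => ?_
    rw [nsmul_eq_mul]
    ring
  · refine sum_congr rfl fun E hE => ?_
    rw [nsmul_eq_mul, prod_range_one_sub_zpow_eq_zero _ (mem_Icc.1 hE).1]
    ring

/-- Expected block error probability of Shannon's random parity-check ensemble
(`m = n·r̄` uniformly random parity checks) under ML decoding over BEC(ε):
averaging over the erasure set `S` (each coordinate erased independently with
probability ε) the probability that the submatrix of erased columns fails to have
full column rank, equals the stated double sum. -/
theorem stmt_2 (n m : ℕ) (hm : m ≤ n) (ε : ℝ) (hε0 : 0 ≤ ε) (hε1 : ε ≤ 1) :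
    (∑ S : Finset (Fin n), ε ^ S.card * (1 - ε) ^ (n - S.card) *
      ((Nat.card {H : Matrix (Fin m) (Fin n) (ZMod 2) //
          (H.submatrix id (fun j : S => (j : Fin n))).rank ≠ S.card} : ℝ) / 2 ^ (m * n))) =
    (∑ E ∈ Finset.range (m + 1), (n.choose E : ℝ) * ε ^ E * (1 - ε) ^ (n - E) *
        (1 - ∏ i ∈ Finset.range E, (1 - (2 : ℝ) ^ ((i : ℤ) - (m : ℤ))))) +
    ∑ E ∈ Finset.Icc (m + 1) n, (n.choose E : ℝ) * ε ^ E * (1 - ε) ^ (n - E) :=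
  stmt_2_general n m hm ε
end

section
/- The number of labeled trees on l ≥ 1 vertices is l^{l-2} (with the convention that for l=1 and l=2 this gives 1). -/
/-!
Rooting a tree at a vertex `r` and sending every other vertex to its neighbour on the path to `r`
identifies trees with parent maps: maps fixing `r` along whose iterates every vertex reaches `r`.
Forgetting `r`, these are rooted forests on `(V ∖ {r}) ⊕ {r}`. Classifying rooted forests on
`s` non-root vertices over `r` roots by the set `J` of vertices whose parent is a root, the forest
restricted to the complement of `J` is a rooted forest with root set `J`, so the counts satisfy
`N s r = ∑ j, (s choose j) * r ^ j * N (s - j) j`. Strong induction and the binomial theorem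
then give `N (s + 1) r = r * (r + s + 1) ^ s`, and Cayley's formula is the case `N (l - 1) 1`.
-/

open Finset SimpleGraph

lemma wellFounded_of_restrict {α : Type*} {R : α → α → Prop} (s : Set α)
    (hs : ∀ a b, R a b → b ∈ s) (h : WellFounded fun a b : s => R a b) : WellFounded R := by
  have acc_of_notMem : ∀ b ∉ s, Acc R b :=
    fun b hb => ⟨_, fun a hab => (hb (hs a b hab)).elim⟩
  have acc_of_mem : ∀ b : s, Acc R b := fun b => by
    induction b using h.induction with
    | _ b ih =>
      refine ⟨_, fun a hab => ?_⟩
      by_cases ha : a ∈ s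
      · exact ih ⟨a, ha⟩ hab
      · exact acc_of_notMem a ha
  exact ⟨fun b => by_cases (fun hb : b ∈ s => acc_of_mem ⟨b, hb⟩) (acc_of_notMem b)⟩

/-- Rooted forests on `S ⊕ R` with root set `R`, encoded by the parent map of the non-root
vertices. -/
abbrev RootedForest (S R : Type*) : Type _ :=
  {f : S → S ⊕ R // WellFounded fun a b => f b = .inl a}

noncomputable def rootedForestCount (s r : ℕ) : ℕ := Nat.card (RootedForest (Fin s) (Fin r))

namespace RootedForest

variable {S R S' R' : Type*}

def congr (e : S ≃ S') (e' : R ≃ R') : RootedForest S R ≃ RootedForest S' R' :=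
  (e.arrowCongr (e.sumCongr e')).subtypeEquiv fun f => by
    constructor
    · intro h
      refine Subrelation.wf (fun {a b} hab => ?_) (InvImage.wf e.symm h)
      simp only [Equiv.arrowCongr_apply, Function.comp_apply, Equiv.sumCongr_apply] at hab
      cases hf : f (e.symm b) <;> simp_all [InvImage, Equiv.eq_symm_apply]
    · intro h
      refine Subrelation.wf (fun {a b} hab => ?_) (InvImage.wf e h)
      simp [InvImage, hab]

lemma card_eq_rootedForestCount (S R : Type*) [Fintype S] [Fintype R] :
    Nat.card (RootedForest S R) = rootedForestCount (Fintype.card S) (Fintype.card R) :=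
  Nat.card_congr (congr (Fintype.equivFin S) (Fintype.equivFin R))

section glue

variable [DecidableEq S]

-- The value `.inl x` on a root parent is junk: it is never taken when `J = rootChildren f`.
def restrictCompl (f : S → S ⊕ R) (J : Finset S) (x : {x // x ∉ J}) : {x // x ∉ J} ⊕ J :=
  (f x).elim (fun y => if hy : y ∈ J then .inr ⟨y, hy⟩ else .inl ⟨y, hy⟩) fun _ => .inl x

def glue (J : Finset S) (h : J → R) (g : {x // x ∉ J} → {x // x ∉ J} ⊕ J) (x : S) :
    S ⊕ R :=
  if hx : x ∈ J then .inr (h ⟨x, hx⟩) else .inl ((g ⟨x, hx⟩).elim Subtype.val Subtype.val)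

lemma wellFounded_glue (J : Finset S) (h : J → R) {g : {x // x ∉ J} → {x // x ∉ J} ⊕ J}
    (hg : WellFounded fun a b => g b = .inl a) :
    WellFounded fun a b => glue J h g b = .inl a := by
  refine wellFounded_of_restrict {x | x ∉ J} (fun a b hab hb => ?_) (Subrelation.wf ?_ hg)
  · simp [glue, hb] at hab
  · rintro ⟨a, ha⟩ ⟨b, hb⟩ hab
    simp only [glue, dif_neg hb, Sum.inl.injEq] at hab
    rcases hgb : g ⟨b, hb⟩ with y | j
    · rw [hgb] at hab
      exact congrArg Sum.inl (Subtype.ext hab)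
    · rw [hgb] at hab
      exact absurd (hab ▸ j.2) ha

end glue

section rootChildren

variable [Fintype S]

def rootChildren (f : S → S ⊕ R) : Finset S := {x | (f x).isRight}

lemma mem_rootChildren {f : S → S ⊕ R} {x : S} : x ∈ rootChildren f ↔ (f x).isRight := by
  simp [rootChildren]

variable [DecidableEq S]

lemma rootChildren_glue (J : Finset S) (h : J → R) (g : {x // x ∉ J} → {x // x ∉ J} ⊕ J) :
    rootChildren (glue J h g) = J := by
  ext x
  by_cases hx : x ∈ J <;> simp [mem_rootChildren, glue, hx]

lemma wellFounded_restrictCompl {f : S → S ⊕ R} {J : Finset S} (hJ : rootChildren f = J)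
    (hf : WellFounded fun a b => f b = .inl a) :
    WellFounded fun a b => restrictCompl f J b = .inl a := by
  subst hJ
  refine Subrelation.wf (fun {a b} hab => ?_) (InvImage.wf Subtype.val hf)
  have hb := b.2
  rw [mem_rootChildren] at hb
  simp only [restrictCompl, InvImage] at hab ⊢
  rcases hfb : f b with y | r
  · by_cases hy : y ∈ rootChildren f <;> simp only [hfb, hy, Sum.elim_inl, dite_true,
      dite_false, reduceCtorEq, Sum.inl.injEq] at hab
    rw [← hab]
  · simp [hfb] at hb

def rootChildrenFiberEquiv (J : Finset S) :
    {f : RootedForest S R // rootChildren f.1 = J} ≃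
      (J → R) × RootedForest {x // x ∉ J} J where
  toFun f := (fun j => (f.1.1 j).getRight (mem_rootChildren.1 (f.2.symm ▸ j.2)),
    ⟨restrictCompl f.1.1 J, wellFounded_restrictCompl f.2 f.1.2⟩)
  invFun p :=
    ⟨⟨glue J p.1 p.2.1, wellFounded_glue J p.1 p.2.2⟩, rootChildren_glue J p.1 p.2.1⟩
  left_inv := by
    rintro ⟨⟨f, hf⟩, rfl⟩
    ext x : 3
    by_cases hx : x ∈ rootChildren f
    · have := mem_rootChildren.1 hx
      rcases hfx : f x with y | r
      · simp [hfx] at this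
      · simp [glue, hx, hfx]
    · rcases hfx : f x with y | r
      · by_cases hy : y ∈ rootChildren f <;> simp [glue, restrictCompl, hx, hfx, hy]
      · simp [mem_rootChildren, hfx] at hx
  right_inv := by
    rintro ⟨h, g, hg⟩
    refine Prod.ext (funext fun j => ?_) (Subtype.ext (funext fun x => ?_))
    · simp [glue, j.2]
    · rcases hgx : g x with y | j
      · simp [glue, restrictCompl, x.2, hgx, y.2]
      · simp [glue, restrictCompl, x.2, hgx, j.2]

end rootChildren

lemma card_eq_sum_card_fiber [Fintype S] [DecidableEq S] [Finite R] :
    Nat.card (RootedForest S R) =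
      ∑ J : Finset S, Nat.card R ^ #J * Nat.card (RootedForest {x // x ∉ J} J) := by
  rw [← Nat.card_congr (Equiv.sigmaFiberEquiv fun f : RootedForest S R => rootChildren f.1),
    Nat.card_sigma]
  refine sum_congr rfl fun J _ => ?_
  rw [Nat.card_congr (rootChildrenFiberEquiv J), Nat.card_prod, Nat.card_fun,
    Nat.card_eq_fintype_card (α := J), Fintype.card_coe]

end RootedForest

open RootedForest

lemma rootedForestCount_eq_sum (s r : ℕ) :
    rootedForestCount s r =
      ∑ j ∈ range (s + 1), s.choose j * (r ^ j * rootedForestCount (s - j) j) := by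
  rw [rootedForestCount, card_eq_sum_card_fiber, ← powerset_univ]
  simp only [card_eq_rootedForestCount, Fintype.card_subtype_compl, Fintype.card_coe,
    Fintype.card_fin, Nat.card_eq_fintype_card]
  rw [sum_powerset_apply_card (fun j => r ^ j * rootedForestCount (s - j) j), card_univ,
    Fintype.card_fin]
  simp only [smul_eq_mul]

lemma rootedForestCount_zero_left (r : ℕ) : rootedForestCount 0 r = 1 :=
  Nat.card_eq_one_iff_unique.2 ⟨inferInstance, ⟨⟨Fin.elim0, ⟨fun a => a.elim0⟩⟩⟩⟩

lemma rootedForestCount_succ_zero (s : ℕ) : rootedForestCount (s + 1) 0 = 0 := by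
  have : IsEmpty (RootedForest (Fin (s + 1)) (Fin 0)) := ⟨fun ⟨f, hf⟩ => by
    obtain ⟨m, -, hm⟩ := hf.has_min Set.univ ⟨0, trivial⟩
    rcases hfm : f m with a | r
    · exact hm a trivial hfm
    · exact r.elim0⟩
  exact Nat.card_of_isEmpty

lemma rootedForestCount_succ (s r : ℕ) :
    rootedForestCount (s + 1) r = r * (r + s + 1) ^ s := by
  induction s using Nat.strong_induction_on generalizing r with
  | _ s ih =>
  have key (i : ℕ) (hi : i ∈ range (s + 1)) :
      (s + 1).choose (i + 1) * rootedForestCount (s - i) (i + 1) =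
        s.choose i * (s + 1) ^ (s - i) := by
    have hN : (s + 1) * rootedForestCount (s - i) (i + 1) = (i + 1) * (s + 1) ^ (s - i) := by
      rcases (Nat.lt_succ_iff.1 (mem_range.1 hi)).lt_or_eq with hlt | rfl
      · obtain ⟨k, hk⟩ : ∃ k, s - i = k + 1 := ⟨s - i - 1, by omega⟩
        rw [hk, ih k (by omega), show i + 1 + k + 1 = s + 1 by omega, pow_succ]
        ring
      · simp [rootedForestCount_zero_left]
    apply Nat.eq_of_mul_eq_mul_left s.succ_pos
    calc (s + 1) * ((s + 1).choose (i + 1) * rootedForestCount (s - i) (i + 1))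
        = (s + 1).choose (i + 1) * (i + 1) * (s + 1) ^ (s - i) := by rw [mul_left_comm, hN]; ring
      _ = (s + 1) * (s.choose i * (s + 1) ^ (s - i)) := by rw [← Nat.add_one_mul_choose_eq]; ring
  calc rootedForestCount (s + 1) r
      = ∑ i ∈ range (s + 1),
          (s + 1).choose (i + 1) * (r ^ (i + 1) * rootedForestCount (s - i) (i + 1)) := by
        rw [rootedForestCount_eq_sum, sum_range_succ', Nat.sub_zero, rootedForestCount_succ_zero,
          mul_zero, mul_zero, add_zero]
        simp only [Nat.add_sub_add_right]
    _ = r * ∑ i ∈ range (s + 1), r ^ i * (s + 1) ^ (s - i) * s.choose i := by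
        rw [mul_sum]
        refine sum_congr rfl fun i hi => ?_
        rw [mul_left_comm, key i hi]
        ring
    _ = r * (r + s + 1) ^ s := by rw [add_assoc, add_pow]; simp only [Nat.cast_id]

variable {V : Type*}

def IsParentMap (r : V) (f : V → V) : Prop :=
  f r = r ∧ WellFounded fun y x => x ≠ r ∧ f x = y

def parentGraph (f : V → V) : SimpleGraph V := fromRel fun x y => f x = y

namespace IsParentMap

variable {r : V} {f : V → V}

lemma apply_ne (hf : IsParentMap r f) {x : V} (hx : x ≠ r) : f x ≠ x :=
  fun h => hf.2.irrefl.irrefl x ⟨hx, h⟩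

lemma apply_apply_ne (hf : IsParentMap r f) {x : V} (hx : x ≠ r) : f (f x) ≠ x := fun h => by
  have hfx : f x ≠ r := fun h' => hx (by rw [← h, h', hf.1])
  exact hf.2.asymmetric _ _ ⟨hx, rfl⟩ ⟨hfx, h⟩

lemma adj_apply (hf : IsParentMap r f) {x : V} (hx : x ≠ r) : (parentGraph f).Adj x (f x) :=
  (fromRel_adj _ _ _).2 ⟨(hf.apply_ne hx).symm, .inl rfl⟩

lemma connected (hf : IsParentMap r f) : (parentGraph f).Connected := by
  refine (connected_iff_exists_forall_reachable _).2 ⟨r, fun x => Reachable.symm ?_⟩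
  induction x using hf.2.induction with
  | _ x ih =>
    by_cases hx : x = r
    · exact hx ▸ Reachable.refl x
    · exact (hf.adj_apply hx).reachable.trans (ih (f x) ⟨hx, rfl⟩)

lemma edgeSet_eq (hf : IsParentMap r f) :
    (parentGraph f).edgeSet = Set.range fun x : {x // x ≠ r} => s(x.1, f x) := by
  ext e
  induction e using Sym2.ind with
  | _ a b =>
    simp only [mem_edgeSet, parentGraph, fromRel_adj, Set.mem_range, Subtype.exists]
    constructor
    · rintro ⟨hab, rfl | rfl⟩
      · exact ⟨a, fun h => hab (by rw [h, hf.1]), rfl⟩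
      · exact ⟨b, fun h => hab (by rw [h, hf.1]), Sym2.eq_swap⟩
    · rintro ⟨x, hx, hxe⟩
      rcases Sym2.eq_iff.1 hxe with ⟨rfl, rfl⟩ | ⟨rfl, rfl⟩
      · exact ⟨(hf.apply_ne hx).symm, .inl rfl⟩
      · exact ⟨hf.apply_ne hx, .inr rfl⟩

lemma card_edgeSet [Finite V] (hf : IsParentMap r f) :
    Nat.card (parentGraph f).edgeSet + 1 = Nat.card V := by
  have hinj : Function.Injective fun x : {x // x ≠ r} => s(x.1, f x) := by
    rintro ⟨x, hx⟩ ⟨y, hy⟩ hxy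
    rcases Sym2.eq_iff.1 hxy with ⟨rfl, -⟩ | ⟨hxfy, hfxy⟩
    · rfl
    · exact (hf.apply_apply_ne hy (by rw [← hxfy]; exact hfxy)).elim
  have := Fintype.ofFinite V
  have : Nonempty V := ⟨r⟩
  classical
  rw [hf.edgeSet_eq, Nat.card_range_of_injective hinj]
  simp only [Nat.card_eq_fintype_card, Fintype.card_subtype_compl, Fintype.card_unique]
  exact Nat.sub_add_cancel Fintype.card_pos

lemma isTree [Finite V] (hf : IsParentMap r f) : (parentGraph f).IsTree :=
  isTree_iff_connected_and_card.2 ⟨hf.connected, hf.card_edgeSet⟩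

-- If `f x ≠ g x`, the edge from `x` to `f x` forces `g (f x) = x`; as `f` and `g` agree at the
-- smaller vertex `f x`, this makes `x` a `2`-cycle of `f`.
lemma eq_of_parentGraph_eq {g : V → V} (hf : IsParentMap r f) (hg : IsParentMap r g)
    (h : parentGraph f = parentGraph g) : f = g := by
  funext x
  induction x using hf.2.induction with
  | _ x ih =>
    by_cases hx : x = r
    · rw [hx, hf.1, hg.1]
    by_contra hne
    have hadj := hf.adj_apply hx
    rw [h, parentGraph, fromRel_adj] at hadj
    have hgfx : g (f x) = x := hadj.2.resolve_left (Ne.symm hne)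
    exact hf.apply_apply_ne hx ((ih (f x) ⟨hx, rfl⟩).trans hgfx)

end IsParentMap

namespace SimpleGraph.IsTree

variable {G : SimpleGraph V} (hG : G.IsTree) (r : V)

noncomputable def pathTo (x : V) : G.Walk x r := (hG.existsUnique_path x r).exists.choose

lemma isPath_pathTo (x : V) : (hG.pathTo r x).IsPath :=
  (hG.existsUnique_path x r).exists.choose_spec

variable {r} in
lemma eq_pathTo {x : V} {p : G.Walk x r} (hp : p.IsPath) : p = hG.pathTo r x :=
  (hG.existsUnique_path x r).unique hp (hG.isPath_pathTo r x)

lemma length_pathTo (x : V) : (hG.pathTo r x).length = G.dist x r := by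
  obtain ⟨p, hp, hlen⟩ := (hG.connected x r).exists_path_of_dist
  rw [← hG.eq_pathTo hp, hlen]

noncomputable def parent (x : V) : V := (hG.pathTo r x).snd

lemma parent_self : hG.parent r r = r := by
  rw [parent, ← hG.eq_pathTo Walk.IsPath.nil]
  rfl

variable {r}

lemma not_nil_pathTo {x : V} (hx : x ≠ r) : ¬(hG.pathTo r x).Nil := fun h => hx h.eq

lemma adj_parent {x : V} (hx : x ≠ r) : G.Adj x (hG.parent r x) :=
  Walk.adj_snd (hG.not_nil_pathTo hx)

lemma dist_parent_lt {x : V} (hx : x ≠ r) : G.dist (hG.parent r x) r < G.dist x r := by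
  calc G.dist (hG.parent r x) r ≤ (hG.pathTo r x).tail.length := dist_le _
    _ < (hG.pathTo r x).length := by
      rw [← Walk.length_tail_add_one (hG.not_nil_pathTo hx)]
      exact Nat.lt_succ_self _
    _ = G.dist x r := hG.length_pathTo r x

variable (r)

lemma isParentMap_parent : IsParentMap r (hG.parent r) :=
  ⟨hG.parent_self r, Subrelation.wf (fun ⟨hx, hxy⟩ => hxy ▸ hG.dist_parent_lt hx)
    (InvImage.wf (G.dist · r) wellFounded_lt)⟩

lemma parentGraph_parent : parentGraph (hG.parent r) = G := by
  ext x y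
  rw [parentGraph, fromRel_adj]
  constructor
  · rintro ⟨hxy, h | h⟩
    · have hx : x ≠ r := by
        rintro rfl
        exact hxy (by rw [← h, parent_self])
      exact h ▸ hG.adj_parent hx
    · have hy : y ≠ r := by
        rintro rfl
        exact hxy (by rw [← h, parent_self])
      exact h ▸ (hG.adj_parent hy).symm
  · intro hxy
    refine ⟨hxy.ne, ?_⟩
    by_cases hy : y ∈ (hG.pathTo r x).support
    · exact .inl (hG.isAcyclic.eq_snd_of_adj_start (hG.isPath_pathTo r x) hxy hy).symm
    · have hx : x ∈ (hG.pathTo r y).support := by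
        simpa using hG.isAcyclic.mem_support_of_ne_mem_support_of_adj_of_isPath
          (hG.isPath_pathTo r y).reverse (hG.isPath_pathTo r x).reverse hxy.symm
          (by simpa using hy)
      exact .inr (hG.isAcyclic.eq_snd_of_adj_start (hG.isPath_pathTo r y) hxy.symm hx).symm

end SimpleGraph.IsTree

noncomputable def treeEquivParentMap [Finite V] (r : V) :
    {G : SimpleGraph V // G.IsTree} ≃ {f : V → V // IsParentMap r f} where
  toFun G := ⟨G.2.parent r, G.2.isParentMap_parent r⟩
  invFun f := ⟨parentGraph f.1, f.2.isTree⟩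
  left_inv G := Subtype.ext (G.2.parentGraph_parent r)
  right_inv f := Subtype.ext <| (f.2.isTree.isParentMap_parent r).eq_of_parentGraph_eq f.2
    (f.2.isTree.parentGraph_parent r)

def parentMapEquivRootedForest [DecidableEq V] (r : V) :
    {f : V → V // IsParentMap r f} ≃ RootedForest {x // x ≠ r} Unit where
  toFun f := ⟨fun x => if h : f.1 x = r then .inr () else .inl ⟨f.1 x, h⟩,
    Subrelation.wf (fun {a b} hab => ⟨b.2, by
      dsimp only at hab
      split_ifs at hab
      rw [← Sum.inl_injective hab]⟩)
      (InvImage.wf Subtype.val f.2.2)⟩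
  invFun g := ⟨fun x => if h : x = r then r else (g.1 ⟨x, h⟩).elim Subtype.val fun _ => r,
    dif_pos rfl, wellFounded_of_restrict {x | x ≠ r} (fun _ _ h => h.1) <|
      Subrelation.wf (fun {a} {b} h => by
        obtain ⟨b, hb⟩ := b
        obtain ⟨-, hab⟩ := h
        simp only [dif_neg hb] at hab
        rcases hgb : g.1 ⟨b, hb⟩ with y | ⟨⟩ <;>
          simp only [hgb, Sum.elim_inl, Sum.elim_inr] at hab
        · exact congrArg Sum.inl (Subtype.ext hab)
        · exact absurd hab.symm a.2) g.2⟩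
  left_inv f := by
    ext x
    by_cases hx : x = r
    · simp [hx, f.2.1]
    · by_cases hfx : f.1 x = r <;> simp [hx, hfx]
  right_inv g := by
    ext x : 2
    rcases hgx : g.1 x with y | ⟨⟩
    · simp [x.2, hgx, y.2]
    · simp [x.2, hgx]

/-- Cayley's formula: the number of labeled trees on `l ≥ 1` vertices is `l^{l-2}`
(with natural subtraction, so the value is `1` for `l = 1, 2`). -/
theorem stmt_8 (l : ℕ) (hl : 1 ≤ l) :
    Nat.card {G : SimpleGraph (Fin l) // G.IsTree} = l ^ (l - 2) := by
  obtain ⟨n, rfl⟩ : ∃ n, l = n + 1 := ⟨l - 1, by omega⟩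
  rw [Nat.card_congr ((treeEquivParentMap 0).trans (parentMapEquivRootedForest 0)),
    card_eq_rootedForestCount]
  simp only [Fintype.card_subtype_compl, Fintype.card_unique, Fintype.card_fin,
    Nat.add_sub_cancel]
  rcases n with _ | n
  · exact rootedForestCount_zero_left 1
  · rw [rootedForestCount_succ, one_mul]
    congr 1
    omega
end

section
/- Fix ℓ ≥ 2 and suppose the scaling P_B(n, ℓ, r, ε) = Q(√n(ε*(ℓ,r) - ε)/α(ℓ,r)) holds exactly for Poisson ensembles, together with the invariance P_B(n,ℓ,r,nε) = P_B(n',ℓ,r',n'ε') whenever nε = n'ε' and (1-r)n = (1-r')n'. Then ε*(ℓ,r') = ε*(ℓ,r)·(1-r')/(1-r) and α(ℓ,r') = α(ℓ,r)·((1-r')/(1-r))^{1/2}. -/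
/-! Taking `n = 1` at rate `r` and `n' = (1 - r)/(1 - r')` at rate `r'`, the invariance equates
two values of `Q` whose arguments are affine in `ε`. Since `Q` is strictly decreasing these affine
functions coincide, and matching their slopes and intercepts yields the rules for `α` and `ε*`. -/

/-- The standard Gaussian tail function `Q(z) = (1/√(2π)) ∫_z^∞ e^{-x²/2} dx`. -/
noncomputable def Qfun (z : ℝ) : ℝ :=
  (1 / Real.sqrt (2 * Real.pi)) * ∫ x in Set.Ioi z, Real.exp (-x ^ 2 / 2)

lemma integrable_exp_neg_sq_div_two :
    MeasureTheory.Integrable (fun x : ℝ => Real.exp (-x ^ 2 / 2)) := by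
  convert integrable_exp_neg_mul_sq (by norm_num : (0 : ℝ) < 1 / 2) using 2 with x
  ring_nf

lemma Qfun_strictAnti : StrictAnti Qfun := by
  intro z w hzw
  have hint := integrable_exp_neg_sq_div_two
  have hsplit : (∫ x in Set.Ioi z, Real.exp (-x ^ 2 / 2)) =
      (∫ x in Set.Ioc z w, Real.exp (-x ^ 2 / 2)) + ∫ x in Set.Ioi w, Real.exp (-x ^ 2 / 2) := by
    rw [← MeasureTheory.setIntegral_union (Set.Ioc_disjoint_Ioi le_rfl) measurableSet_Ioi
      hint.integrableOn hint.integrableOn, Set.Ioc_union_Ioi_eq_Ioi hzw.le]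
  have hpos : 0 < ∫ x in Set.Ioc z w, Real.exp (-x ^ 2 / 2) := by
    rw [← intervalIntegral.integral_of_le hzw.le]
    exact intervalIntegral.intervalIntegral_pos_of_pos hint.intervalIntegrable
      (fun x => Real.exp_pos _) hzw
  unfold Qfun
  gcongr
  linarith

lemma eq_div_sq_and_eq_div_of_forall_affine_eq {e e' a a' s : ℝ} (ha : a ≠ 0) (ha' : a' ≠ 0)
    (hs : s ≠ 0) (h : ∀ ε, (e - ε) / a = s * (e' - ε / s ^ 2) / a') :
    e' = e / s ^ 2 ∧ a' = a / s := by
  have h₀ := h 0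
  have h₁ := h (s ^ 2)
  simp only [sub_zero, zero_div] at h₀
  rw [div_self (pow_ne_zero 2 hs)] at h₁
  field_simp at h₀ h₁
  have hwidth : a' = a / s := by
    field_simp
    apply mul_left_cancel₀ hs
    linear_combination h₀ - h₁
  refine ⟨?_, hwidth⟩
  subst hwidth
  field_simp at h₀ ⊢
  linear_combination -h₀

theorem stmt_11_general (P : ℝ → ℝ → ℝ → ℝ) (εs α : ℝ → ℝ) (r r' : ℝ)
    (hr : r < 1) (hr' : r' < 1)
    (hα : ∀ ρ : ℝ, ρ < 1 → 0 < α ρ)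
    (hscal : ∀ ρ : ℝ, ρ < 1 → ∀ n : ℝ, 0 < n → ∀ ε : ℝ,
      P n ρ ε = Qfun (Real.sqrt n * (εs ρ - ε) / α ρ))
    (hinv : ∀ n n' ε ε' : ℝ, 0 < n → 0 < n' →
      n * ε = n' * ε' → (1 - r) * n = (1 - r') * n' → P n r ε = P n' r' ε') :
    εs r' = εs r * (1 - r') / (1 - r) ∧
    α r' = α r * Real.sqrt ((1 - r') / (1 - r)) := by
  have hs : 0 < 1 - r := by linarith
  have hs' : 0 < 1 - r' := by linarith
  set c := (1 - r) / (1 - r') with hc_def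
  have hc : 0 < c := by positivity
  have key : ∀ ε, (εs r - ε) / α r = √c * (εs r' - ε / √c ^ 2) / α r' := by
    intro ε
    have hP := hinv 1 c ε (ε / c) one_pos hc (by field_simp) (by rw [hc_def]; field_simp)
    rw [hscal r hr 1 one_pos, hscal r' hr' c hc] at hP
    simpa [Real.sq_sqrt hc.le] using Qfun_strictAnti.injective hP
  obtain ⟨hεs, hαs⟩ := eq_div_sq_and_eq_div_of_forall_affine_eq (hα r hr).ne' (hα r' hr').ne'
    (Real.sqrt_pos.mpr hc).ne' key
  refine ⟨by rw [hεs, Real.sq_sqrt hc.le, hc_def]; field_simp, ?_⟩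
  rw [hαs, div_eq_mul_inv, ← Real.sqrt_inv, hc_def, inv_div]

/-- If the block error probability of Poisson ensembles satisfies exactly the scaling
`P(n,ρ,ε) = Q(√n(ε*(ρ)-ε)/α(ρ))` together with the invariance
`P(n,r,ε) = P(n',r',ε')` whenever `nε = n'ε'` and `(1-r)n = (1-r')n'`, then
`ε*(r') = ε*(r)(1-r')/(1-r)` and `α(r') = α(r)√((1-r')/(1-r))`. -/
theorem stmt_11 (P : ℝ → ℝ → ℝ → ℝ) (εs α : ℝ → ℝ) (r r' : ℝ)
    (hr : r < 1) (hr' : r' < 1)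
    (hεs : ∀ ρ : ℝ, ρ < 1 → εs ρ ∈ Set.Ioo (0 : ℝ) 1)
    (hα : ∀ ρ : ℝ, ρ < 1 → 0 < α ρ)
    (hscal : ∀ ρ : ℝ, ρ < 1 → ∀ n : ℝ, 0 < n → ∀ ε : ℝ,
      P n ρ ε = Qfun (Real.sqrt n * (εs ρ - ε) / α ρ))
    (hinv : ∀ n n' ε ε' : ℝ, 0 < n → 0 < n' →
      n * ε = n' * ε' → (1 - r) * n = (1 - r') * n' → P n r ε = P n' r' ε') :
    εs r' = εs r * (1 - r') / (1 - r) ∧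
    α r' = α r * Real.sqrt ((1 - r') / (1 - r)) :=
  stmt_11_general P εs α r r' hr hr' hα hscal hinv
end
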